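/- arXiv:2512.17118 — 6 statements merged into one kernel-verified Lean document; each statement's English description precedes it below -/
import Mathlib

section
/- Let F be a field. For all x, y ∈ F** := F \ {0,1}, the equality {x} + {1−x} = {y} + {1−y} holds in the pre-Bloch group P(F). (In particular the element c_F := {x} + {1−x} is independent of the choice of x ∈ F**.) -/
/-- The five-term (pentagon) relations inside the free abelian group on
`F** = F \ {0,1}`: for `x ≠ y` in `F**`, the element
`{x} - {y} + {y/x} + {(1-x)/(1-y)} - {y(1-x)/(x(1-y))}`. -/
def fiveTermSet (F : Type*) [Field F] :
    Set (FreeAbelianGroup {z : F // z ≠ 0 ∧ z ≠ 1}) :=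
  { r | ∃ (x y : F) (hx : x ≠ 0 ∧ x ≠ 1) (hy : y ≠ 0 ∧ y ≠ 1) (_ : x ≠ y)
      (h1 : y / x ≠ 0 ∧ y / x ≠ 1)
      (h2 : (1 - x) / (1 - y) ≠ 0 ∧ (1 - x) / (1 - y) ≠ 1)
      (h3 : y * (1 - x) / (x * (1 - y)) ≠ 0 ∧ y * (1 - x) / (x * (1 - y)) ≠ 1),
      r = FreeAbelianGroup.of ⟨x, hx⟩ - FreeAbelianGroup.of ⟨y, hy⟩
          + FreeAbelianGroup.of ⟨y / x, h1⟩
          + FreeAbelianGroup.of ⟨(1 - x) / (1 - y), h2⟩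
          - FreeAbelianGroup.of ⟨y * (1 - x) / (x * (1 - y)), h3⟩ }

/-- The pre-Bloch group (scissors congruence group) `P(F)`: the quotient of the
free abelian group on `F** = F \ {0,1}` by the subgroup generated by the
five-term relations. -/
abbrev PreBloch (F : Type*) [Field F] :=
  FreeAbelianGroup {z : F // z ≠ 0 ∧ z ≠ 1} ⧸ AddSubgroup.closure (fiveTermSet F)

/-- The class `{z} ∈ P(F)` of a generator `z ∈ F**`. -/
def br {F : Type*} [Field F] (z : F) (h0 : z ≠ 0) (h1 : z ≠ 1) : PreBloch F :=
  QuotientAddGroup.mk (FreeAbelianGroup.of ⟨z, h0, h1⟩)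

/-!
The difference of the five-term relations at `(x, y)` and at `(1 - y, 1 - x)` is
`{x} + {1 - x} - {y} - {1 - y}`: the two relations share the terms `{y/x}` and
`{(1-x)/(1-y)}`, and their last terms have the same argument `y(1-x)/(x(1-y))`.
-/

lemma div_ne_zero_and_ne_one {K : Type*} [DivisionRing K] {a b : K} (ha : a ≠ 0) (hb : b ≠ 0)
    (hab : a ≠ b) :
    a / b ≠ 0 ∧ a / b ≠ 1 :=
  ⟨div_ne_zero ha hb, fun h => hab ((div_eq_one_iff_eq hb).mp h)⟩

open scoped Classical in
/-- The symbol `{z}` for every `z : F`, with the junk value `0` when `z ∈ {0, 1}`. -/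
noncomputable def PreBloch.bracket {F : Type*} [Field F] (z : F) : PreBloch F :=
  if h : z ≠ 0 ∧ z ≠ 1 then QuotientAddGroup.mk (FreeAbelianGroup.of ⟨z, h⟩) else 0

namespace PreBloch

variable {F : Type*} [Field F]

lemma bracket_of_ne {z : F} (h : z ≠ 0 ∧ z ≠ 1) :
    bracket z = QuotientAddGroup.mk (FreeAbelianGroup.of ⟨z, h⟩) :=
  dif_pos h

lemma br_eq_bracket (z : F) (h0 : z ≠ 0) (h1 : z ≠ 1) : br z h0 h1 = bracket z :=
  (bracket_of_ne ⟨h0, h1⟩).symm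

lemma bracket_fiveTerm {x y : F} (hx0 : x ≠ 0) (hx1 : x ≠ 1) (hy0 : y ≠ 0) (hy1 : y ≠ 1)
    (hxy : x ≠ y) :
    bracket x - bracket y + bracket (y / x) + bracket ((1 - x) / (1 - y))
      - bracket (y * (1 - x) / (x * (1 - y))) = 0 := by
  have hx1' : 1 - x ≠ 0 := sub_ne_zero.mpr hx1.symm
  have hy1' : 1 - y ≠ 0 := sub_ne_zero.mpr hy1.symm
  have h1 := div_ne_zero_and_ne_one hy0 hx0 hxy.symm
  have h2 := div_ne_zero_and_ne_one hx1' hy1' (fun h => hxy (by linear_combination -h))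
  have h3 := div_ne_zero_and_ne_one (mul_ne_zero hy0 hx1') (mul_ne_zero hx0 hy1')
    (fun h => hxy (by linear_combination -h))
  have hrel : _ ∈ fiveTermSet F := ⟨x, y, ⟨hx0, hx1⟩, ⟨hy0, hy1⟩, hxy, h1, h2, h3, rfl⟩
  rw [bracket_of_ne ⟨hx0, hx1⟩, bracket_of_ne ⟨hy0, hy1⟩, bracket_of_ne h1, bracket_of_ne h2,
    bracket_of_ne h3, ← QuotientAddGroup.mk_sub, ← QuotientAddGroup.mk_add,
    ← QuotientAddGroup.mk_add, ← QuotientAddGroup.mk_sub, QuotientAddGroup.eq_zero_iff]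
  exact AddSubgroup.subset_closure hrel

end PreBloch

/-- For all `x, y ∈ F** = F \ {0,1}`, `{x} + {1-x} = {y} + {1-y}` in the
pre-Bloch group `P(F)`; in particular `c_F := {x} + {1-x}` is independent of
the choice of `x ∈ F**`. -/
theorem cF_well_defined (F : Type*) [Field F] (x y : F)
    (hx0 : x ≠ 0) (hx1 : x ≠ 1) (hy0 : y ≠ 0) (hy1 : y ≠ 1) :
    br x hx0 hx1
      + br (1 - x) (sub_ne_zero.mpr (Ne.symm hx1)) (fun h => hx0 (sub_eq_self.mp h)) =
    br y hy0 hy1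
      + br (1 - y) (sub_ne_zero.mpr (Ne.symm hy1)) (fun h => hy0 (sub_eq_self.mp h)) := by
  simp only [PreBloch.br_eq_bracket]
  obtain rfl | hxy := eq_or_ne x y
  · rfl
  have hrel := PreBloch.bracket_fiveTerm hx0 hx1 hy0 hy1 hxy
  have hrel' := PreBloch.bracket_fiveTerm (x := 1 - y) (y := 1 - x) (sub_ne_zero.mpr hy1.symm)
    (fun h => hy0 (by linear_combination -h)) (sub_ne_zero.mpr hx1.symm)
    (fun h => hx0 (by linear_combination -h)) (fun h => hxy (by linear_combination h))
  rw [sub_sub_cancel, sub_sub_cancel,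
    show (1 - x) * y / ((1 - y) * x) = y * (1 - x) / (x * (1 - y)) by ring] at hrel'
  linear_combination (norm := abel) hrel - hrel'
end

section
/- Let F be a field of characteristic zero. For every x ∈ F** := F \ {0,1}, one has 3·({x} + {1−x}) = 2·{−1} in the pre-Bloch group P(F). (Equivalently, 3c_F = ⟨−1⟩ where c_F := {x} + {1−x} and ⟨−1⟩ = {−1} + {(−1)⁻¹} = 2{−1}.) -/
/-!
Subtracting the five-term relation at `(1 - y, 1 - x)` from the one at `(x, y)` cancels the
three derived terms (they are the same up to order), so `{x} + {1 - x}` does not depend on `x`;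
at `x = 2` it is `{2} + {-1}`. Four instances of the five-term relation with arguments among
`±2, ±1/2, ±1/3, 1/4, -1` add up to `{-1} + 3{2} = 0`, hence `3({2} + {-1}) = 2{-1}`.
-/

namespace PreBloch

variable {F : Type*} [Field F]

open Classical in
/-- `{z}`, extended by the junk value `0` at `z = 0, 1`. -/
noncomputable def symbol (z : F) : PreBloch F :=
  if h : z ≠ 0 ∧ z ≠ 1 then br z h.1 h.2 else 0

theorem symbol_eq_br {z : F} (h0 : z ≠ 0) (h1 : z ≠ 1) : symbol z = br z h0 h1 :=
  dif_pos ⟨h0, h1⟩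

theorem symbol_fiveTerm {x y a b c : F} (hx0 : x ≠ 0) (hx1 : x ≠ 1) (hy0 : y ≠ 0)
    (hy1 : y ≠ 1) (hxy : x ≠ y) (ha : y / x = a) (hb : (1 - x) / (1 - y) = b)
    (hc : y * (1 - x) / (x * (1 - y)) = c) :
    symbol x - symbol y + symbol a + symbol b - symbol c = 0 := by
  subst ha hb hc
  have h1x : 1 - x ≠ 0 := sub_ne_zero.mpr (Ne.symm hx1)
  have h1y : 1 - y ≠ 0 := sub_ne_zero.mpr (Ne.symm hy1)
  have ha' : y / x ≠ 0 ∧ y / x ≠ 1 :=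
    ⟨div_ne_zero hy0 hx0, fun h => hxy ((div_eq_one_iff_eq hx0).mp h).symm⟩
  have hb' : (1 - x) / (1 - y) ≠ 0 ∧ (1 - x) / (1 - y) ≠ 1 :=
    ⟨div_ne_zero h1x h1y, fun h => hxy (by linear_combination -(div_eq_one_iff_eq h1y).mp h)⟩
  have hc' : y * (1 - x) / (x * (1 - y)) ≠ 0 ∧ y * (1 - x) / (x * (1 - y)) ≠ 1 :=
    ⟨div_ne_zero (mul_ne_zero hy0 h1x) (mul_ne_zero hx0 h1y),
      fun h => hxy (by linear_combination -(div_eq_one_iff_eq (mul_ne_zero hx0 h1y)).mp h)⟩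
  rw [symbol_eq_br hx0 hx1, symbol_eq_br hy0 hy1, symbol_eq_br ha'.1 ha'.2,
    symbol_eq_br hb'.1 hb'.2, symbol_eq_br hc'.1 hc'.2]
  exact (QuotientAddGroup.eq_zero_iff _).mpr <| AddSubgroup.subset_closure
    ⟨x, y, ⟨hx0, hx1⟩, ⟨hy0, hy1⟩, hxy, ha', hb', hc', rfl⟩

theorem symbol_add_symbol_one_sub {x y : F} (hx0 : x ≠ 0) (hx1 : x ≠ 1) (hy0 : y ≠ 0)
    (hy1 : y ≠ 1) : symbol x + symbol (1 - x) = symbol y + symbol (1 - y) := by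
  rcases eq_or_ne x y with rfl | hxy
  · rfl
  have R1 := symbol_fiveTerm hx0 hx1 hy0 hy1 hxy rfl rfl rfl
  have R2 := symbol_fiveTerm (x := 1 - y) (y := 1 - x) (c := y * (1 - x) / (x * (1 - y)))
    (by grind) (by grind) (by grind) (by grind) (by grind) rfl
    (by rw [sub_sub_cancel, sub_sub_cancel]) (by ring)
  linear_combination (norm := abel) R1 - R2

theorem symbol_neg_one_add_three_nsmul_symbol_two (h2 : (2 : F) ≠ 0) (h3 : (3 : F) ≠ 0) :
    symbol (-1 : F) + 3 • symbol (2 : F) = 0 := by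
  have h4 : (4 : F) ≠ 0 := by simpa [show (4 : F) = 2 * 2 by norm_num] using h2
  have e1 := symbol_fiveTerm (x := (-2 : F)) (y := -1/2) (a := 1/4) (b := 2) (c := 1/2)
    (by grind) (by grind) (by grind) (by grind) (by grind) (by grind) (by grind) (by grind)
  have e2 := symbol_fiveTerm (x := (-1/2 : F)) (y := 1/4) (a := -1/2) (b := 2) (c := -1)
    (by grind) (by grind) (by grind) (by grind) (by grind) (by grind) (by grind) (by grind)
  have e3 := symbol_fiveTerm (x := (-1/3 : F)) (y := 1/3) (a := -1) (b := 2) (c := -2)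
    (by grind) (by grind) (by grind) (by grind) (by grind) (by grind) (by grind) (by grind)
  have e4 := symbol_fiveTerm (x := (1/3 : F)) (y := -1/3) (a := -1) (b := 1/2) (c := -1/2)
    (by grind) (by grind) (by grind) (by grind) (by grind) (by grind) (by grind) (by grind)
  linear_combination (norm := abel) e1 + e2 + e3 + e4

theorem three_nsmul_symbol_add_symbol_one_sub (h2 : (2 : F) ≠ 0) (h3 : (3 : F) ≠ 0) {x : F}
    (hx0 : x ≠ 0) (hx1 : x ≠ 1) : 3 • (symbol x + symbol (1 - x)) = 2 • symbol (-1 : F) := by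
  have h21 : (2 : F) ≠ 1 := fun h => one_ne_zero (by linear_combination h)
  rw [symbol_add_symbol_one_sub hx0 hx1 h2 h21, show (1 : F) - 2 = -1 by ring]
  linear_combination (norm := abel) symbol_neg_one_add_three_nsmul_symbol_two h2 h3

end PreBloch

open PreBloch in
/-- Over a field of characteristic zero, `3({x} + {1-x}) = 2{-1}` in the
pre-Bloch group `P(F)` for every `x ∈ F** = F \ {0,1}`; that is,
`3 c_F = ⟨-1⟩`. -/
theorem three_cF_eq (F : Type*) [Field F] [CharZero F] (x : F)
    (hx0 : x ≠ 0) (hx1 : x ≠ 1) :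
    3 • (br x hx0 hx1
        + br (1 - x) (sub_ne_zero.mpr (Ne.symm hx1)) (fun h => hx0 (sub_eq_self.mp h))) =
    2 • br (-1 : F) (neg_ne_zero.mpr one_ne_zero) (by norm_num) := by
  rw [← symbol_eq_br, ← symbol_eq_br, ← symbol_eq_br]
  exact three_nsmul_symbol_add_symbol_one_sub two_ne_zero three_ne_zero hx0 hx1
end

section
/- Let F be a field of characteristic zero containing an element i with i² = −1. Then for every x ∈ F** := F \ {0,1}, one has 3·({x} + {1−x}) = 0 in the pre-Bloch group P(F). -/
/-!
Since the five-term relations at `(x, y)` and `(1 - y, 1 - x)` share three terms,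
`ψ(z) = {z} + {1 - z}` is a constant `c` on `F**`. The sum of the five-term relations at `(x, y)`
and `(y, x)`, taken at `((1 - i)/2, (1 + i)/2)` and at `(i, 1 + i)`, gives `2({i} + {-i}) = 2{-1}`
and `{1 - i} + {1 + i} + {(1 + i)/2} + {(1 - i)/2} = {2} + {1/2}`. Together they say
`2ψ(i) + 2ψ(-i) + 2ψ((1 + i)/2) = 2ψ(-1) + ψ(1/2)`, that is `6c = 3c`.
-/

namespace PreBloch

variable {F : Type*} [Field F]

open Classical in
/-- The symbol `{z}`, extended by `0` outside `F**` so that relations need no side proofs. -/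
noncomputable def of (z : F) : PreBloch F :=
  if h : z ≠ 0 ∧ z ≠ 1 then br z h.1 h.2 else 0

theorem of_eq_br {z : F} (h0 : z ≠ 0) (h1 : z ≠ 1) : of z = br z h0 h1 :=
  dif_pos ⟨h0, h1⟩

theorem five_term {x y : F} (hx0 : x ≠ 0) (hx1 : x ≠ 1) (hy0 : y ≠ 0) (hy1 : y ≠ 1)
    (hxy : x ≠ y) :
    of x - of y + of (y / x) + of ((1 - x) / (1 - y)) - of (y * (1 - x) / (x * (1 - y))) = 0 := by
  have h1 : y / x ≠ 0 ∧ y / x ≠ 1 := by grind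
  have h2 : (1 - x) / (1 - y) ≠ 0 ∧ (1 - x) / (1 - y) ≠ 1 := by grind
  have h3 : y * (1 - x) / (x * (1 - y)) ≠ 0 ∧ y * (1 - x) / (x * (1 - y)) ≠ 1 := by grind
  have hmem : FreeAbelianGroup.of ⟨x, hx0, hx1⟩ - FreeAbelianGroup.of ⟨y, hy0, hy1⟩
      + FreeAbelianGroup.of ⟨y / x, h1⟩ + FreeAbelianGroup.of ⟨(1 - x) / (1 - y), h2⟩
      - FreeAbelianGroup.of ⟨y * (1 - x) / (x * (1 - y)), h3⟩ ∈ fiveTermSet F :=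
    ⟨x, y, ⟨hx0, hx1⟩, ⟨hy0, hy1⟩, hxy, h1, h2, h3, rfl⟩
  rw [of_eq_br hx0 hx1, of_eq_br hy0 hy1, of_eq_br h1.1 h1.2, of_eq_br h2.1 h2.2,
    of_eq_br h3.1 h3.2]
  exact (QuotientAddGroup.eq_zero_iff _).mpr (AddSubgroup.subset_closure hmem)

theorem of_add_of_one_sub_eq {x y : F} (hx0 : x ≠ 0) (hx1 : x ≠ 1) (hy0 : y ≠ 0) (hy1 : y ≠ 1) :
    of x + of (1 - x) = of y + of (1 - y) := by
  rcases eq_or_ne x y with rfl | hxy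
  · rfl
  have h := five_term hx0 hx1 hy0 hy1 hxy
  have h' := five_term (x := 1 - y) (y := 1 - x) (by grind) (by grind) (by grind) (by grind)
    (by grind)
  rw [sub_sub_cancel, sub_sub_cancel, mul_comm (1 - x), mul_comm (1 - y)] at h'
  linear_combination (norm := module) h - h'

theorem five_term_add_swap {x y : F} (hx0 : x ≠ 0) (hx1 : x ≠ 1) (hy0 : y ≠ 0) (hy1 : y ≠ 1)
    (hxy : x ≠ y) :
    of (y / x) + of (x / y) + of ((1 - x) / (1 - y)) + of ((1 - y) / (1 - x)) =
      of (y * (1 - x) / (x * (1 - y))) + of (x * (1 - y) / (y * (1 - x))) := by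
  have h := five_term hx0 hx1 hy0 hy1 hxy
  have h' := five_term hy0 hy1 hx0 hx1 hxy.symm
  linear_combination (norm := module) h + h'

theorem two_smul_of_add_of_neg_eq (h2 : (2 : F) ≠ 0) {i : F} (hi : i ^ 2 = -1) :
    2 • (of i + of (-i)) = 2 • of (-1 : F) := by
  have h := five_term_add_swap (x := (1 - i) / 2) (y := (1 + i) / 2)
    (by grind) (by grind) (by grind) (by grind) (by grind)
  rw [show (1 + i) / 2 / ((1 - i) / 2) = i by grind,
    show (1 - i) / 2 / ((1 + i) / 2) = -i by grind,
    show (1 - (1 - i) / 2) / (1 - (1 + i) / 2) = i by grind,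
    show (1 - (1 + i) / 2) / (1 - (1 - i) / 2) = -i by grind,
    show (1 + i) / 2 * (1 - (1 - i) / 2) / ((1 - i) / 2 * (1 - (1 + i) / 2)) = -1 by grind,
    show (1 - i) / 2 * (1 - (1 + i) / 2) / ((1 + i) / 2 * (1 - (1 - i) / 2)) = -1 by grind] at h
  linear_combination (norm := module) h

theorem of_one_sub_add_of_one_add_add_eq (h2 : (2 : F) ≠ 0) {i : F} (hi : i ^ 2 = -1) :
    of (1 - i) + of (1 + i) + (of ((1 + i) / 2) + of ((1 - i) / 2)) = of 2 + of 2⁻¹ := by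
  have h := five_term_add_swap (x := i) (y := 1 + i)
    (by grind) (by grind) (by grind) (by grind) (by grind)
  rw [show (1 + i) / i = 1 - i by grind,
    show i / (1 + i) = (1 + i) / 2 by grind,
    show (1 - i) / (1 - (1 + i)) = 1 + i by grind,
    show (1 - (1 + i)) / (1 - i) = (1 - i) / 2 by grind,
    show (1 + i) * (1 - i) / (i * (1 - (1 + i))) = 2 by grind,
    show i * (1 - (1 + i)) / ((1 + i) * (1 - i)) = 2⁻¹ by grind] at h
  linear_combination (norm := module) h

theorem three_smul_of_add_of_one_sub_eq_zero (h2 : (2 : F) ≠ 0) {i : F} (hi : i ^ 2 = -1)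
    {x : F} (hx0 : x ≠ 0) (hx1 : x ≠ 1) :
    3 • (of x + of (1 - x)) = 0 := by
  have hψ {z : F} (hz0 : z ≠ 0) (hz1 : z ≠ 1) : of z + of (1 - z) = of x + of (1 - x) :=
    of_add_of_one_sub_eq hz0 hz1 hx0 hx1
  have hψi := hψ (z := i) (by grind) (by grind)
  have hψni := hψ (z := -i) (by grind) (by grind)
  have hψhalf := hψ (z := (1 + i) / 2) (by grind) (by grind)
  have hψn1 := hψ (z := -1) (by grind) (by grind)
  have hψinv2 := hψ (z := 2⁻¹) (by grind) (by grind)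
  rw [sub_neg_eq_add] at hψni
  rw [show 1 - (1 + i) / 2 = (1 - i) / 2 by grind] at hψhalf
  rw [show (1 : F) - -1 = 2 by norm_num] at hψn1
  rw [show 1 - (2 : F)⁻¹ = 2⁻¹ by grind] at hψinv2
  linear_combination (norm := module) two_smul_of_add_of_neg_eq h2 hi
    + 2 • of_one_sub_add_of_one_add_add_eq h2 hi
    - 2 • hψi - 2 • hψni - 2 • hψhalf + 2 • hψn1 + hψinv2

end PreBloch

/-- Over a field of characteristic zero containing a square root `i` of `-1`,
`3({x} + {1-x}) = 0` in the pre-Bloch group `P(F)` for every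
`x ∈ F** = F \ {0,1}`. -/
theorem three_cF_eq_zero (F : Type*) [Field F] [CharZero F]
    (i : F) (hi : i ^ 2 = -1) (x : F) (hx0 : x ≠ 0) (hx1 : x ≠ 1) :
    3 • (br x hx0 hx1
        + br (1 - x) (sub_ne_zero.mpr (Ne.symm hx1)) (fun h => hx0 (sub_eq_self.mp h))) = 0 := by
  rw [← PreBloch.of_eq_br, ← PreBloch.of_eq_br]
  exact PreBloch.three_smul_of_add_of_one_sub_eq_zero two_ne_zero hi hx0 hx1
end

section
/- Let F be a field and let x, y ∈ Fˣ be units such that for all integers a, b, the equality x^a = y^b implies a = 0 and b = 0. Then x ∧ y ≠ 0 in ∧²ℤ Fˣ, the second exterior power over ℤ of the units group of F. -/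
/-!
Multiplicative independence of `x` and `y` is `ℤ`-linear independence of `x, y` in the additive
group `Fˣ`. Coordinates with respect to a linearly independent family are `ℤ`-linear forms on its
span; since `ℚ` is an injective `ℤ`-module they extend to `ℚ`-valued forms `fᵢ` on the whole group.
The determinant of `(fᵢ(vⱼ))` is then an alternating `ℤ`-multilinear form that takes the value `1`
on the family, so the wedge product of the family cannot vanish.
-/

/-- The image of a pair `(x, y)` under the canonical alternating bilinear map
`M × M → ⋀²_R M` into the second exterior power of `M` over `R`. -/
noncomputable def wedgePair (R M : Type*) [CommRing R] [AddCommGroup M] [Module R M]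
    (x y : M) : ⋀[R]^2 M :=
  ⟨ExteriorAlgebra.ιMulti R 2 ![x, y],
    ExteriorAlgebra.ιMulti_range R 2 (Set.mem_range_self _)⟩

def AlternatingMap.restrictScalars (R : Type*) {A M N ι : Type*} [Semiring R] [Semiring A]
    [SMul R A] [AddCommMonoid M] [AddCommMonoid N] [Module A M] [Module A N] [Module R M]
    [Module R N] [IsScalarTower R A M] [IsScalarTower R A N] (f : M [⋀^ι]→ₗ[A] N) :
    M [⋀^ι]→ₗ[R] N :=
  { f.toMultilinearMap.restrictScalars R with map_eq_zero_of_eq' := f.map_eq_zero_of_eq' }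

@[simp]
lemma AlternatingMap.restrictScalars_apply (R : Type*) {A M N ι : Type*} [Semiring R] [Semiring A]
    [SMul R A] [AddCommMonoid M] [AddCommMonoid N] [Module A M] [Module A N] [Module R M]
    [Module R N] [IsScalarTower R A M] [IsScalarTower R A N] (f : M [⋀^ι]→ₗ[A] N) (v : ι → M) :
    f.restrictScalars R v = f v := rfl

theorem exteriorPower.ιMulti_ne_zero_of_alternatingMap {R M N : Type*} [CommRing R]
    [AddCommGroup M] [Module R M] [AddCommGroup N] [Module R N] {n : ℕ}
    (B : M [⋀^Fin n]→ₗ[R] N) {v : Fin n → M} (hv : B v ≠ 0) : ιMulti R n v ≠ 0 := by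
  intro h
  apply hv
  rw [← alternatingMapLinearEquiv_apply_ιMulti, h, map_zero]

theorem LinearIndependent.exists_linearMap_rat_apply_eq_single {M ι : Type*} [AddCommGroup M]
    [DecidableEq ι] {v : ι → M} (hv : LinearIndependent ℤ v) :
    ∃ f : M →ₗ[ℤ] ι → ℚ, ∀ i, f (v i) = Pi.single i 1 := by
  let b := Module.Basis.span hv
  let g : Submodule.span ℤ (Set.range v) →ₗ[ℤ] ι → ℚ :=
    (Algebra.linearMap ℤ ℚ).compLeft ι ∘ₗ Finsupp.lcoeFun ∘ₗ b.repr.toLinearMap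
  obtain ⟨f, hf⟩ := (Module.Baer.of_divisible (ι → ℚ)).extension_property
    (Submodule.subtype _) Subtype.val_injective g
  refine ⟨f, fun i => ?_⟩
  have hbi : (b i : M) = v i := by rw [Module.Basis.span_apply]
  rw [← hbi, ← Submodule.subtype_apply, ← LinearMap.comp_apply, hf]
  ext j
  simp [g, Finsupp.single_apply, Pi.single_apply, eq_comm]

theorem exteriorPower.ιMulti_ne_zero_of_linearIndependent {M : Type*} [AddCommGroup M] {n : ℕ}
    {v : Fin n → M} (hv : LinearIndependent ℤ v) : ιMulti ℤ n v ≠ 0 := by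
  obtain ⟨f, hf⟩ := hv.exists_linearMap_rat_apply_eq_single
  refine ιMulti_ne_zero_of_alternatingMap
    (((Matrix.detRowAlternating).restrictScalars ℤ).compLinearMap f) ?_
  have hfv : (fun i => f (v i)) = (1 : Matrix (Fin n) (Fin n) ℚ) := by
    ext i j
    simp [hf, Matrix.one_apply, Pi.single_apply, eq_comm]
  rw [AlternatingMap.compLinearMap_apply, AlternatingMap.restrictScalars_apply, hfv]
  exact Matrix.det_one.trans_ne one_ne_zero

theorem linearIndependent_ofMul_pair_iff {G : Type*} [CommGroup G] {x y : G} :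
    LinearIndependent ℤ ![Additive.ofMul x, Additive.ofMul y] ↔
      ∀ a b : ℤ, x ^ a = y ^ b → a = 0 ∧ b = 0 := by
  rw [LinearIndependent.pair_iff]
  constructor
  · intro h a b hab
    have := h a (-b) (by
      rw [← ofMul_zpow, ← ofMul_zpow, ← ofMul_mul, zpow_neg, hab, mul_inv_cancel, ofMul_one])
    omega
  · intro h a b hab
    have := h a (-b) (by
      rw [zpow_neg, eq_inv_iff_mul_eq_one, ← toMul_ofMul (x ^ a * y ^ b), ofMul_mul, ofMul_zpow,
        ofMul_zpow, hab, toMul_zero])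
    omega

/-- If `x, y ∈ Fˣ` are units of a field such that `x^a = y^b` (for integers
`a, b`) only when `a = b = 0`, then `x ∧ y ≠ 0` in `⋀²_ℤ Fˣ`, the second
exterior power over `ℤ` of the (multiplicatively written) group of units,
regarded additively as a `ℤ`-module. -/
theorem wedge_ne_zero_of_multiplicatively_independent (F : Type*) [Field F] (x y : Fˣ)
    (h : ∀ a b : ℤ, x ^ a = y ^ b → a = 0 ∧ b = 0) :
    wedgePair ℤ (Additive Fˣ) (Additive.ofMul x) (Additive.ofMul y) ≠ 0 :=
  exteriorPower.ιMulti_ne_zero_of_linearIndependent (linearIndependent_ofMul_pair_iff.mpr h)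
end

section
/- Let F be a field of characteristic zero. Then 3 ∧ (−2) ≠ 0 in ∧²ℤ Fˣ, the second exterior power over ℤ of the units group of F, where 3 and −2 denote the corresponding units of F. -/
theorem LinearIndependent.exists_linearMap_comp_eq {ι R M Q : Type*} [Ring R]
    [AddCommGroup M] [Module R M] [AddCommGroup Q] [Module R Q] (hQ : Module.Baer R Q)
    {v : ι → M} (hv : LinearIndependent R v) (g : ι → Q) :
    ∃ a : M →ₗ[R] Q, a ∘ v = g := by
  obtain ⟨a, ha⟩ := hQ.extension_property _ hv (Finsupp.linearCombination R g)
  exact ⟨a, funext fun i => by simpa using LinearMap.congr_fun ha (Finsupp.single i 1)⟩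

namespace exteriorPower

variable {R S M : Type*} [CommRing R] [CommRing S] [Algebra R S] [AddCommGroup M] [Module R M]

noncomputable def detAlternating {n : ℕ} (f : Fin n → M →ₗ[R] S) : M [⋀^Fin n]→ₗ[R] S where
  toMultilinearMap :=
    (Matrix.detRowAlternating.toMultilinearMap.restrictScalars R).compLinearMap
      fun _ => LinearMap.pi f
  map_eq_zero_of_eq' v i j hv hij :=
    Matrix.detRowAlternating.map_eq_zero_of_eq _ (by simp [hv]) hij

theorem detAlternating_apply {n : ℕ} (f : Fin n → M →ₗ[R] S) (v : Fin n → M) :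
    detAlternating f v = (Matrix.of fun i j => f j (v i)).det :=
  rfl

theorem ιMulti_ne_zero_of_det_ne_zero {n : ℕ} (f : Fin n → M →ₗ[R] S) {v : Fin n → M}
    (h : (Matrix.of fun i j => f j (v i)).det ≠ 0) : ιMulti R n v ≠ 0 := fun hv =>
  h <| by rw [← detAlternating_apply, ← alternatingMapLinearEquiv_apply_ιMulti, hv, map_zero]

theorem ιMulti_ne_zero_of_linearIndependent_s12 [Nontrivial S] (hS : Module.Baer R S) {n : ℕ}
    {v : Fin n → M} (hv : LinearIndependent R v) : ιMulti R n v ≠ 0 := by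
  choose f hf using fun j =>
    hv.exists_linearMap_comp_eq hS fun i => (1 : Matrix (Fin n) (Fin n) S) i j
  refine ιMulti_ne_zero_of_det_ne_zero f ?_
  have hdual : Matrix.of (fun i j => f j (v i)) = 1 :=
    Matrix.ext fun i j => congrFun (hf j) i
  simp [hdual]

end exteriorPower

theorem eq_zero_of_three_zpow_mul_neg_two_zpow_eq_one {s t : ℤ}
    (h : (3 : ℚ) ^ s * (-2 : ℚ) ^ t = 1) : s = 0 ∧ t = 0 := by
  have hval : ∀ p : ℕ, p.Prime → padicValRat p ((3 : ℚ) ^ s * (-2 : ℚ) ^ t) =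
      s * padicValNat p 3 + t * padicValNat p 2 := fun p hp => by
    have := Fact.mk hp
    rw [padicValRat.mul (zpow_ne_zero _ three_ne_zero) (zpow_ne_zero _ (by norm_num)),
      padicValRat.zpow, padicValRat.zpow, padicValRat.neg]
    exact_mod_cast rfl
  have h3 := hval 3 Nat.prime_three
  have h2 := hval 2 Nat.prime_two
  rw [h, padicValRat.one] at h3 h2
  exact ⟨by simpa [padicValNat.eq_zero_of_not_dvd] using h3.symm,
    by simpa [padicValNat.eq_zero_of_not_dvd] using h2.symm⟩

theorem linearIndependent_ofMul_three_neg_two (F : Type*) [Field F] [CharZero F] :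
    LinearIndependent ℤ ![Additive.ofMul (Units.mk0 (3 : F) (by norm_num)),
      Additive.ofMul (Units.mk0 (-2 : F) (by norm_num))] := by
  refine LinearIndependent.pair_iff.mpr fun s t hst =>
    eq_zero_of_three_zpow_mul_neg_two_zpow_eq_one ?_
  have hF := congrArg (fun x => ((Additive.toMul x : Fˣ) : F)) hst
  simp only [toMul_add, toMul_zsmul, toMul_ofMul, toMul_zero, Units.val_mul,
    Units.val_zpow_eq_zpow_val, Units.val_mk0, Units.val_one] at hF
  exact Rat.cast_injective (α := F) (by push_cast; exact hF)

/-- In a field of characteristic zero, `3 ∧ (-2) ≠ 0` in `⋀²_ℤ Fˣ`, the second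
exterior power over `ℤ` of the group of units of `F` (written additively as a
`ℤ`-module), where `3` and `-2` denote the corresponding units of `F`. -/
theorem three_wedge_neg_two_ne_zero (F : Type*) [Field F] [CharZero F] :
    wedgePair ℤ (Additive Fˣ)
      (Additive.ofMul (Units.mk0 (3 : F) (by norm_num)))
      (Additive.ofMul (Units.mk0 (-2 : F) (by norm_num))) ≠ 0 :=
  exteriorPower.ιMulti_ne_zero_of_linearIndependent_s12 (Module.Baer.of_divisible ℚ)
    (linearIndependent_ofMul_three_neg_two F)
end

section
/- Let F be a field and let x, y ∈ F** := F \ {0,1} with x ≠ y. Set t := y(1−x)/(x(1−y)). Then in ∧²ℤ Fˣ the five-term identity holds: x ∧ (1−x) − y ∧ (1−y) + (y/x) ∧ (1 − y/x) + ((1−x)/(1−y)) ∧ (1 − (1−x)/(1−y)) − t ∧ (1 − t) = 0. (Consequently the assignment {z} ↦ z ∧ (1−z) induces a well-defined group homomorphism λ : P(F) → ∧²ℤ Fˣ.) -/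
/-- For nonzero field elements `u, v`, the element `u ∧ v` of `⋀²_ℤ Fˣ`, the
second exterior power over `ℤ` of the group of units of `F` (written additively
as a `ℤ`-module). -/
noncomputable def wedgeF {F : Type*} [Field F] (u v : F) (hu : u ≠ 0) (hv : v ≠ 0) :
    ⋀[ℤ]^2 (Additive Fˣ) :=
  wedgePair ℤ (Additive Fˣ) (Additive.ofMul (Units.mk0 u hu)) (Additive.ofMul (Units.mk0 v hv))

/-!
Every argument z and 1 - z occurring in the identity is a monomial in the five units
a = x, b = y, c = 1 - x, d = 1 - y, e = x - y; for instance 1 - y/x = e/a and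
1 - t = e/(ad). Writing Fˣ additively, the five wedges become wedges of ℤ-linear
combinations of a, b, c, d, e, and expanding them bilinearly everything cancels except
a ∧ c + c ∧ a and a ∧ d + d ∧ a, which vanish because the wedge is alternating.
-/

section
variable (R M : Type*) [CommRing R] [AddCommGroup M] [Module R M]
open ExteriorAlgebra

theorem coe_wedgePair (x y : M) : (wedgePair R M x y : ExteriorAlgebra R M) = ι R x * ι R y := by
  simp [wedgePair]

noncomputable def wedgePairBilin : M →ₗ[R] M →ₗ[R] ⋀[R]^2 M :=
  LinearMap.mk₂ R (wedgePair R M)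
    (fun _ _ _ => Subtype.ext (by simp [coe_wedgePair, add_mul]))
    (fun _ _ _ => Subtype.ext (by simp [coe_wedgePair]))
    (fun _ _ _ => Subtype.ext (by simp [coe_wedgePair, mul_add]))
    (fun _ _ _ => Subtype.ext (by simp [coe_wedgePair]))

theorem wedgePairBilin_apply (x y : M) : wedgePairBilin R M x y = wedgePair R M x y := rfl

theorem isAlt_wedgePairBilin : (wedgePairBilin R M).IsAlt := fun x =>
  Subtype.ext (by simp [wedgePairBilin_apply, coe_wedgePair])

theorem wedgePair_five_term (a b c d e : M) :
    wedgePair R M a c - wedgePair R M b d + wedgePair R M (b - a) (e - a)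
      + wedgePair R M (c - d) (e - d) - wedgePair R M (b + c - (a + d)) (e - (a + d)) = 0 := by
  have H := isAlt_wedgePairBilin R M
  simp only [← wedgePairBilin_apply, map_add, map_sub, LinearMap.add_apply, LinearMap.sub_apply,
    H.self_eq_zero]
  rw [← H.neg c a, ← H.neg d a]
  abel

end

theorem wedgeF_eq_wedgePair {F : Type*} [Field F] {u v : F} {hu : u ≠ 0} {hv : v ≠ 0}
    (a b : Fˣ) (ha : (a : F) = u) (hb : (b : F) = v) :
    wedgeF u v hu hv = wedgePair ℤ (Additive Fˣ) (Additive.ofMul a) (Additive.ofMul b) := by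
  rw [wedgeF, show Units.mk0 u hu = a from Units.ext ha.symm,
    show Units.mk0 v hv = b from Units.ext hb.symm]

/-- The five-term identity in `⋀²_ℤ Fˣ`: for `x ≠ y` in `F** = F \ {0,1}`,
setting `t := y(1-x)/(x(1-y))`, one has
`x ∧ (1-x) - y ∧ (1-y) + (y/x) ∧ (1 - y/x) + ((1-x)/(1-y)) ∧ (1 - (1-x)/(1-y)) - t ∧ (1-t) = 0`.
Consequently `{z} ↦ z ∧ (1-z)` induces a well-defined homomorphism
`λ : P(F) → ⋀²_ℤ Fˣ`. -/
theorem wedge_five_term (F : Type*) [Field F] (x y : F)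
    (hx0 : x ≠ 0) (hx1 : x ≠ 1) (hy0 : y ≠ 0) (hy1 : y ≠ 1) (hxy : x ≠ y) :
    wedgeF x (1 - x) hx0 (sub_ne_zero.mpr (Ne.symm hx1))
      - wedgeF y (1 - y) hy0 (sub_ne_zero.mpr (Ne.symm hy1))
      + wedgeF (y / x) (1 - y / x) (div_ne_zero hy0 hx0)
          (sub_ne_zero.mpr (fun h => hxy (((div_eq_one_iff_eq hx0).mp h.symm).symm)))
      + wedgeF ((1 - x) / (1 - y)) (1 - (1 - x) / (1 - y))
          (div_ne_zero (sub_ne_zero.mpr (Ne.symm hx1)) (sub_ne_zero.mpr (Ne.symm hy1)))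
          (sub_ne_zero.mpr (fun h => hxy (by
            have h2 := (div_eq_one_iff_eq (sub_ne_zero.mpr (Ne.symm hy1))).mp h.symm
            linear_combination -h2)))
      - wedgeF (y * (1 - x) / (x * (1 - y))) (1 - y * (1 - x) / (x * (1 - y)))
          (div_ne_zero (mul_ne_zero hy0 (sub_ne_zero.mpr (Ne.symm hx1)))
            (mul_ne_zero hx0 (sub_ne_zero.mpr (Ne.symm hy1))))
          (sub_ne_zero.mpr (fun h => hxy (by
            have h2 := (div_eq_one_iff_eq
              (mul_ne_zero hx0 (sub_ne_zero.mpr (Ne.symm hy1)))).mp h.symm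
            linear_combination -h2))) = 0 := by
  have hc : 1 - x ≠ 0 := sub_ne_zero.mpr (Ne.symm hx1)
  have hd : 1 - y ≠ 0 := sub_ne_zero.mpr (Ne.symm hy1)
  have he : x - y ≠ 0 := sub_ne_zero.mpr hxy
  set a := Units.mk0 x hx0
  set b := Units.mk0 y hy0
  set c := Units.mk0 (1 - x) hc
  set d := Units.mk0 (1 - y) hd
  set e := Units.mk0 (x - y) he
  rw [wedgeF_eq_wedgePair (u := x) (v := 1 - x) a c rfl rfl,
    wedgeF_eq_wedgePair (u := y) (v := 1 - y) b d rfl rfl,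
    wedgeF_eq_wedgePair (b / a) (e / a) (by simp [a, b])
      (by simp only [Units.val_div_eq_div_val, Units.val_mk0, e, a]; field_simp),
    wedgeF_eq_wedgePair (c / d) (e / d) (by simp [c, d])
      (by simp only [Units.val_div_eq_div_val, Units.val_mk0, e, d]; field_simp; ring),
    wedgeF_eq_wedgePair (b * c / (a * d)) (e / (a * d)) (by simp [a, b, c, d])
      (by simp only [Units.val_div_eq_div_val, Units.val_mk0, Units.val_mul, e, a, d]
          field_simp; ring)]
  simp only [ofMul_div, ofMul_mul]
  exact wedgePair_five_term ℤ _ _ _ _ _ _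
end
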